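/- Suppose for each p in a finite index set P we have reals N(p), a(p), b(p) ≥ 0 and ratios r(p), s(p) ∈ [0,1] such that (1−η)^α·a(p) ≤ N(p) ≤ (1+η)^α·a(p) and |r(p) − s(p)| < γ, where a(p)·r(p) = b(p), Σ_p b(p) = T, and Σ_p a(p) ≤ M·T for some M with γ·M ≤ η. Then (1−η)^{α+1}·T ≤ Σ_p N(p)·s(p) ≤ (1+η)^{α+1}·T. -/

import Mathlib

/-!
Replacing each true ratio `r p = b p / a p` by its estimate `s p` moves `Σ a p · s p` away from
`Σ b p = T` by at most `γ · Σ a p ≤ γ M T ≤ η T`, so `Σ a p · s p` is a `(1 ± η)`-approximation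
of `T`. Replacing `a p` by `N p` costs a further factor `(1 ± η)^α`, since the weights `s p` are
nonnegative.
-/

open Finset

theorem abs_sum_mul_sub_sum_mul_le {ι : Type*} (t : Finset ι) {a r s : ι → ℝ} {γ : ℝ}
    (ha : ∀ p ∈ t, 0 ≤ a p) (hrs : ∀ p ∈ t, |r p - s p| ≤ γ) :
    |∑ p ∈ t, a p * s p - ∑ p ∈ t, a p * r p| ≤ γ * ∑ p ∈ t, a p := by
  rw [← sum_sub_distrib, mul_sum]
  refine (abs_sum_le_sum_abs _ _).trans (sum_le_sum fun p hp => ?_)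
  rw [← mul_sub, abs_mul, abs_of_nonneg (ha p hp), abs_sub_comm, mul_comm]
  exact mul_le_mul_of_nonneg_right (hrs p hp) (ha p hp)

theorem mul_sum_mul_le_sum_mul {ι : Type*} (t : Finset ι) {f g s : ι → ℝ} (c : ℝ)
    (hfg : ∀ p ∈ t, c * f p ≤ g p) (hs : ∀ p ∈ t, 0 ≤ s p) :
    c * ∑ p ∈ t, f p * s p ≤ ∑ p ∈ t, g p * s p := by
  rw [mul_sum]
  refine sum_le_sum fun p hp => ?_
  rw [← mul_assoc]
  exact mul_le_mul_of_nonneg_right (hfg p hp) (hs p hp)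

theorem sum_mul_le_mul_sum_mul {ι : Type*} (t : Finset ι) {f g s : ι → ℝ} (c : ℝ)
    (hfg : ∀ p ∈ t, f p ≤ c * g p) (hs : ∀ p ∈ t, 0 ≤ s p) :
    ∑ p ∈ t, f p * s p ≤ c * ∑ p ∈ t, g p * s p := by
  rw [mul_sum]
  refine sum_le_sum fun p hp => ?_
  rw [← mul_assoc]
  exact mul_le_mul_of_nonneg_right (hfg p hp) (hs p hp)

theorem stmt_16_general {P : Type*} [Fintype P] (N a b r s : P → ℝ) (η γ T M : ℝ) (α : ℕ)
    (ha : ∀ p, 0 ≤ a p) (hb : ∀ p, 0 ≤ b p)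
    (hs : ∀ p, s p ∈ Set.Icc (0 : ℝ) 1)
    (happrox : ∀ p, (1 - η) ^ α * a p ≤ N p ∧ N p ≤ (1 + η) ^ α * a p)
    (hclose : ∀ p, |r p - s p| < γ)
    (hbr : ∀ p, a p * r p = b p)
    (hT : ∑ p, b p = T)
    (hM : ∑ p, a p ≤ M * T)
    (hγ : 0 ≤ γ) (hη0 : 0 ≤ η) (hη1 : η ≤ 1) (hγM : γ * M ≤ η) :
    (1 - η) ^ (α + 1) * T ≤ ∑ p, N p * s p ∧
      ∑ p, N p * s p ≤ (1 + η) ^ (α + 1) * T := by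
  have hT0 : 0 ≤ T := hT ▸ sum_nonneg fun p _ => hb p
  have hdev : |∑ p, a p * s p - T| ≤ η * T :=
    calc |∑ p, a p * s p - T| ≤ γ * ∑ p, a p := by
          simpa only [hbr, hT] using abs_sum_mul_sub_sum_mul_le univ (fun p _ => ha p)
            fun p _ => (hclose p).le
      _ ≤ γ * M * T := by rw [mul_assoc]; exact mul_le_mul_of_nonneg_left hM hγ
      _ ≤ η * T := mul_le_mul_of_nonneg_right hγM hT0
  obtain ⟨hdev_hi, hdev_lo⟩ := abs_sub_le_iff.1 hdev
  have hs0 : ∀ p ∈ univ, 0 ≤ s p := fun p _ => (hs p).1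
  constructor
  · calc (1 - η) ^ (α + 1) * T = (1 - η) ^ α * ((1 - η) * T) := by ring
      _ ≤ (1 - η) ^ α * ∑ p, a p * s p :=
          mul_le_mul_of_nonneg_left (by linarith) (pow_nonneg (by linarith) α)
      _ ≤ ∑ p, N p * s p := mul_sum_mul_le_sum_mul univ _ (fun p _ => (happrox p).1) hs0
  · calc ∑ p, N p * s p ≤ (1 + η) ^ α * ∑ p, a p * s p :=
          sum_mul_le_mul_sum_mul univ _ (fun p _ => (happrox p).2) hs0
      _ ≤ (1 + η) ^ α * ((1 + η) * T) :=
          mul_le_mul_of_nonneg_left (by linarith) (pow_nonneg (by linarith) α)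
      _ = (1 + η) ^ (α + 1) * T := by ring

/-- Abstract form of the layer estimate: if each `N p` is a `(1±η)^α`-approximation of
`a p`, each estimated ratio `s p` is within `γ` of the true ratio `r p = b p / a p`,
`Σ b p = T`, `Σ a p ≤ M·T` and `γ·M ≤ η`, then `Σ N p · s p` is a
`(1±η)^(α+1)`-approximation of `T`. -/
theorem stmt_16 {P : Type*} [Fintype P] (N a b r s : P → ℝ) (η γ T M : ℝ) (α : ℕ)
    (ha : ∀ p, 0 ≤ a p) (hb : ∀ p, 0 ≤ b p) (hN : ∀ p, 0 ≤ N p)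
    (hr : ∀ p, r p ∈ Set.Icc (0 : ℝ) 1) (hs : ∀ p, s p ∈ Set.Icc (0 : ℝ) 1)
    (happrox : ∀ p, (1 - η) ^ α * a p ≤ N p ∧ N p ≤ (1 + η) ^ α * a p)
    (hclose : ∀ p, |r p - s p| < γ)
    (hbr : ∀ p, a p * r p = b p)
    (hT : ∑ p, b p = T)
    (hM : ∑ p, a p ≤ M * T)
    (hγ : 0 ≤ γ) (hη0 : 0 ≤ η) (hη1 : η ≤ 1) (hγM : γ * M ≤ η) :
    (1 - η) ^ (α + 1) * T ≤ ∑ p, N p * s p ∧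
      ∑ p, N p * s p ≤ (1 + η) ^ (α + 1) * T :=
  stmt_16_general N a b r s η γ T M α ha hb hs happrox hclose hbr hT hM hγ hη0 hη1 hγM
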